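/- arXiv:1908.04853 — 9 statements merged into one kernel-verified Lean document; each statement's English description precedes it below -/
import Mathlib

section
/- Let I be an ideal on ℕ and μ = (μ_n) a smooth sequence of lower semicontinuous submeasures. If I is a Borel subset of the Cantor space P(ℕ), then J(I,μ) := {A ⊆ ℕ : μ_n(A) →_I 0} is also a Borel subset of P(ℕ). -/
open Filter Set Topology

/-- A submeasure on ℕ: a monotone, subadditive map `P(ℕ) → [0,∞]` vanishing on `∅`
and finite on singletons. -/
structure Submeasure where
  toFun : Set ℕ → ENNReal
  empty' : toFun ∅ = 0
  mono' : ∀ ⦃A B : Set ℕ⦄, A ⊆ B → toFun A ≤ toFun B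
  subadd' : ∀ A B : Set ℕ, toFun (A ∪ B) ≤ toFun A + toFun B
  singleton_lt_top' : ∀ n : ℕ, toFun {n} < ⊤

instance : CoeFun Submeasure (fun _ => Set ℕ → ENNReal) :=
  ⟨Submeasure.toFun⟩

/-- A sequence of submeasures is smooth if `μ_n({k}) → 0` for every `k` and
`limsup_n μ_n(ℕ) > 0`. -/
def SmoothSubmeasureSeq (μ : ℕ → Submeasure) : Prop :=
  (∀ k : ℕ, Tendsto (fun n => μ n {k}) atTop (nhds 0)) ∧
    0 < Filter.limsup (fun n => μ n Set.univ) atTop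

/-- A (possibly improper) ideal on ℕ: contains all finite sets, closed under
subsets and finite unions. -/
def IsIdeal (I : Set (Set ℕ)) : Prop :=
  (∀ A : Set ℕ, A.Finite → A ∈ I) ∧
    (∀ ⦃A B : Set ℕ⦄, A ⊆ B → B ∈ I → A ∈ I) ∧
    (∀ ⦃A B : Set ℕ⦄, A ∈ I → B ∈ I → A ∪ B ∈ I)

/-- A proper ideal on ℕ. -/
def IsProperIdeal (I : Set (Set ℕ)) : Prop :=
  IsIdeal I ∧ (Set.univ : Set ℕ) ∉ I

/-- `J(I,μ) = {A ⊆ ℕ : μ_n(A) →_I 0}`. -/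
def JIdeal (I : Set (Set ℕ)) (μ : ℕ → Submeasure) : Set (Set ℕ) :=
  {A : Set ℕ | ∀ ε : ℝ, 0 < ε → {n : ℕ | ENNReal.ofReal ε ≤ μ n A} ∈ I}

/-- `(I,μ)`-convergence of a sequence `x` to `l`. -/
def IMuConv (I : Set (Set ℕ)) (μ : ℕ → Submeasure) {X : Type*} [TopologicalSpace X]
    (x : ℕ → X) (l : X) : Prop :=
  ∀ U ∈ nhds l, ∀ ε : ℝ, 0 < ε →
    {n : ℕ | ENNReal.ofReal ε ≤ μ n {k : ℕ | x k ∉ U}} ∈ I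

/-- `J`-convergence of a sequence `x` to `l`, for a family `J` of subsets of ℕ. -/
def IdealConv (J : Set (Set ℕ)) {X : Type*} [TopologicalSpace X]
    (x : ℕ → X) (l : X) : Prop :=
  ∀ U ∈ nhds l, {n : ℕ | x n ∉ U} ∈ J

/-- A submeasure is lower semicontinuous if `φ(A) = lim_n φ(A ∩ [1,n])` for all `A`. -/
def LowerSemicontinuousSubmeasure (φ : Submeasure) : Prop :=
  ∀ A : Set ℕ, Tendsto (fun n : ℕ => φ (A ∩ Set.Icc 1 n)) atTop (nhds (φ A))

/-- Identification of `P(ℕ)` with the Cantor space `{0,1}^ℕ` via characteristic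
functions. -/
noncomputable def chi (A : Set ℕ) : ℕ → Bool :=
  fun n => @decide (n ∈ A) (Classical.propDecidable _)


lemma chi_inj : Function.Injective chi := by
  intro A B h
  ext n
  have := congrFun h n
  simpa [chi, @decide_eq_decide (n ∈ A) (n ∈ B)] using this

lemma chi_setOf (f : ℕ → Bool) : chi {k | f k = true} = f := by
  ext n
  simp [chi]

lemma meas_mu (φ : Set ℕ → ENNReal)
    (h : ∀ A : Set ℕ, Tendsto (fun m : ℕ => φ (A ∩ Set.Icc 1 m)) atTop (nhds (φ A))) :
    Measurable fun f : ℕ → Bool => φ {k | f k = true} := by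
  apply measurable_of_tendsto_metrizable'
    (f := fun m (f : ℕ → Bool) => φ ({k | f k = true} ∩ Set.Icc 1 m)) atTop
  · intro m
    have heq : (fun f : ℕ → Bool => φ ({k | f k = true} ∩ Set.Icc 1 m)) =
        (fun r : (Set.Icc 1 m : Set ℕ) → Bool =>
          φ {k : ℕ | ∃ h : k ∈ Set.Icc 1 m, r ⟨k, h⟩ = true}) ∘
        (fun f (k : (Set.Icc 1 m : Set ℕ)) => f k.1) := by
      funext f
      simp only [Function.comp]
      congr 1
      ext k
      simp only [Set.mem_inter_iff, Set.mem_setOf_eq]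
      constructor
      · rintro ⟨h1, h2⟩; exact ⟨h2, h1⟩
      · rintro ⟨h1, h2⟩; exact ⟨h2, h1⟩
    rw [heq]
    exact (measurable_of_countable _).comp
      (measurable_pi_lambda _ (fun k => measurable_pi_apply k.1))
  · rw [tendsto_pi_nhds]
    intro f
    exact h _

/-- if `I` is Borel then so is `J(I,μ)`, for any smooth sequence of
lower semicontinuous submeasures `μ`. (The product σ-algebra on `ℕ → Bool`
coincides with the Borel σ-algebra of the Cantor space.) -/
theorem stmt_4 (I : Set (Set ℕ)) (hI : IsProperIdeal I)
    (μ : ℕ → Submeasure) (hμ : SmoothSubmeasureSeq μ)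
    (hlsc : ∀ n : ℕ, LowerSemicontinuousSubmeasure (μ n))
    (hBorel : MeasurableSet (chi '' I)) :
    MeasurableSet (chi '' JIdeal I μ) := by
  classical
  -- the coordinate maps g m : (ℕ → Bool) → (ℕ → Bool)
  set g : ℕ → (ℕ → Bool) → (ℕ → Bool) := fun m f =>
    chi {n : ℕ | ENNReal.ofReal (1 / (m + 1)) ≤ μ n {k | f k = true}} with hg
  have key : chi '' JIdeal I μ = ⋂ m : ℕ, (g m) ⁻¹' (chi '' I) := by
    ext f
    constructor
    · rintro ⟨A, hA, rfl⟩
      refine Set.mem_iInter.2 fun m => ?_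
      have hA' : {k | chi A k = true} = A := by
        ext k; simp [chi]
      refine ⟨_, ?_, rfl⟩
      simp only [hg, hA']
      exact hA (1 / (m + 1)) (by positivity)
    · intro hf
      refine ⟨{k | f k = true}, ?_, chi_setOf f⟩
      intro ε hε
      obtain ⟨m, hm⟩ := exists_nat_one_div_lt hε
      have h1 := Set.mem_iInter.1 hf m
      obtain ⟨B, hB, hBe⟩ := h1
      have hB' : {n : ℕ | ENNReal.ofReal (1 / (m + 1)) ≤ μ n {k | f k = true}} = B :=
        chi_inj hBe.symm
      rw [← hB'] at hB
      refine hI.1.2.1 ?_ hB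
      intro n hn
      simp only [Set.mem_setOf_eq] at hn ⊢
      exact le_trans (ENNReal.ofReal_le_ofReal (le_of_lt (by push_cast; exact hm))) hn
  rw [key]
  refine MeasurableSet.iInter fun m => ?_
  have hgm : Measurable (g m) := by
    apply measurable_pi_lambda
    intro n
    have hmu : Measurable fun f : ℕ → Bool => μ n {k | f k = true} :=
      meas_mu (μ n) (hlsc n)
    have hset : MeasurableSet
        {f : ℕ → Bool | ENNReal.ofReal (1 / (m + 1)) ≤ μ n {k | f k = true}} :=
      hmu measurableSet_Ici
    have : (fun f : ℕ → Bool => g m f n) = fun f =>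
        decide (f ∈ {f : ℕ → Bool | ENNReal.ofReal (1 / (m + 1)) ≤ μ n {k | f k = true}}) := by
      funext f
      simp only [hg, chi, Set.mem_setOf_eq]
    rw [this]
    refine measurable_to_countable' fun b => ?_
    cases b
    · convert hset.compl using 1
      ext f
      simp
    · convert hset using 1
      ext f
      simp
  exact hgm hBorel
end

section
/- Let I be an ideal on ℕ and μ = (μ_n) a smooth sequence of lower semicontinuous submeasures. If I is an analytic subset of the Cantor space P(ℕ), then J(I,μ) := {A ⊆ ℕ : μ_n(A) →_I 0} is also an analytic subset of P(ℕ). -/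
open Filter Set Topology

/-! Since `I` is closed under subsets, `J(I,μ) = ⋂ₖ {A : {n : μ_n(A) ≥ 1/(k+1)} ∈ I}`, so `J(I,μ)`
is a countable intersection of preimages of `I` under the maps `A ↦ {n : μ_n(A) ≥ 1/(k+1)}`.
These maps are Borel on the Cantor space: lower semicontinuity of `μ_n` makes `A ↦ μ_n(A)` a
supremum of functions of finitely many coordinates, i.e. a lower semicontinuous function.
Analytic sets are closed under Borel preimages and countable intersections. -/

open MeasureTheory

lemma DependsOn.continuous_of_finite {ι α β : Type*} [TopologicalSpace α] [DiscreteTopology α]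
    [TopologicalSpace β] {f : (ι → α) → β} {s : Set ι} (hs : s.Finite) (hf : DependsOn f s) :
    Continuous f := by
  refine IsLocallyConstant.continuous ((IsLocallyConstant.iff_eventually_eq f).2 fun x => ?_)
  have hnear : ∀ᶠ y in 𝓝 x, ∀ i ∈ s, y i = x i :=
    (Filter.eventually_all_finite hs).2 fun i _ =>
      (continuous_apply i).continuousAt.eventually_mem
        ((isOpen_discrete {x i}).mem_nhds (mem_singleton (x i)))
  exact hnear.mono fun y hy => hf hy

protected lemma MeasureTheory.AnalyticSet.preimage_of_measurable {X Y : Type*}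
    [tX : TopologicalSpace X] [PolishSpace X] [MeasurableSpace X] [BorelSpace X]
    [TopologicalSpace Y] [T2Space Y] [MeasurableSpace Y] [OpensMeasurableSpace Y]
    [SecondCountableTopology Y]
    {s : Set Y} (hs : AnalyticSet s) {f : X → Y} (hf : Measurable f) : AnalyticSet (f ⁻¹' s) := by
  obtain ⟨t', hle, hcont, hpol⟩ := hf.exists_continuous
  have := @AnalyticSet.preimage X Y t' _ hpol _ s hs f hcont
  simpa using @AnalyticSet.image_of_continuous X t' X tX _ this id (continuous_id_of_le hle)

noncomputable def chiEquiv : Set ℕ ≃ (ℕ → Bool) where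
  toFun := chi
  invFun x := {m | x m = true}
  left_inv A := by ext; simp [chi]
  right_inv x := by funext; simp [chi]

@[simp] lemma mem_chiEquiv_symm {x : ℕ → Bool} {m : ℕ} : m ∈ chiEquiv.symm x ↔ x m = true :=
  Iff.rfl

@[simp] lemma chiEquiv_symm_chi (A : Set ℕ) : chiEquiv.symm (chi A) = A :=
  chiEquiv.symm_apply_apply A

lemma measurable_chi_setOf_le {X : Type*} [MeasurableSpace X] {f : ℕ → X → ENNReal}
    (hf : ∀ n, Measurable (f n)) (c : ENNReal) : Measurable fun x => chi {n | c ≤ f n x} :=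
  measurable_pi_iff.2 fun n => measurable_to_bool <| by
    convert (hf n) (measurableSet_Ici (a := c)) using 1
    ext x
    simp [chi]

lemma LowerSemicontinuousSubmeasure.iSup_inter_Icc {φ : Submeasure}
    (hφ : LowerSemicontinuousSubmeasure φ) (A : Set ℕ) : ⨆ k, φ (A ∩ Icc 1 k) = φ A :=
  tendsto_nhds_unique (tendsto_atTop_iSup fun _ _ hab =>
    φ.mono' (inter_subset_inter_right _ (Icc_subset_Icc_right hab))) (hφ A)

lemma LowerSemicontinuousSubmeasure.lowerSemicontinuous {φ : Submeasure}
    (hφ : LowerSemicontinuousSubmeasure φ) :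
    LowerSemicontinuous fun x : ℕ → Bool => φ (chiEquiv.symm x) := by
  have hsup : (fun x => φ (chiEquiv.symm x)) = fun x => ⨆ k, φ (chiEquiv.symm x ∩ Icc 1 k) :=
    funext fun x => (hφ.iSup_inter_Icc _).symm
  rw [hsup]
  refine lowerSemicontinuous_iSup fun k => Continuous.lowerSemicontinuous ?_
  refine DependsOn.continuous_of_finite (finite_Icc 1 k) fun x y hxy => ?_
  congr 1
  ext m
  simp only [mem_inter_iff, mem_chiEquiv_symm]
  exact and_congr_left fun hm => by rw [hxy m hm]

lemma JIdeal_eq_iInter_preimage {I : Set (Set ℕ)} (hI : ∀ ⦃A B : Set ℕ⦄, A ⊆ B → B ∈ I → A ∈ I)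
    (μ : ℕ → Submeasure) :
    JIdeal I μ = ⋂ k : ℕ, (fun A => {n | ENNReal.ofReal (1 / (k + 1)) ≤ μ n A}) ⁻¹' I := by
  ext A
  simp only [JIdeal, mem_ofPred_eq, mem_iInter, mem_preimage]
  refine ⟨fun hA k => hA _ Nat.one_div_pos_of_nat, fun hA ε hε => ?_⟩
  obtain ⟨k, hk⟩ := exists_nat_one_div_lt hε
  exact hI (fun n hn => (ENNReal.ofReal_le_ofReal hk.le).trans hn) (hA k)

theorem stmt_5_general (I : Set (Set ℕ)) (hI : IsProperIdeal I)
    (μ : ℕ → Submeasure)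
    (hlsc : ∀ n : ℕ, LowerSemicontinuousSubmeasure (μ n))
    (hAnalytic : MeasureTheory.AnalyticSet (chi '' I)) :
    MeasureTheory.AnalyticSet (chi '' JIdeal I μ) := by
  have hchi (S : Set (Set ℕ)) : chi '' S = chiEquiv.symm ⁻¹' S :=
    chiEquiv.image_eq_preimage_symm S
  rw [hchi] at hAnalytic ⊢
  rw [JIdeal_eq_iInter_preimage hI.1.2.1, preimage_iInter]
  refine AnalyticSet.iInter fun k => ?_
  have : PolishSpace (ℕ → Bool) := instPolishSpaceOfSeparableSpaceOfIsCompletelyMetrizableSpace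
  have hsuperlevel := measurable_chi_setOf_le (fun n => (hlsc n).lowerSemicontinuous.measurable)
    (ENNReal.ofReal (1 / (k + 1)))
  convert hAnalytic.preimage_of_measurable hsuperlevel using 1
  ext x
  simp

/-- if `I` is analytic then so is `J(I,μ)`, for any smooth sequence of
lower semicontinuous submeasures `μ`. -/
theorem stmt_5 (I : Set (Set ℕ)) (hI : IsProperIdeal I)
    (μ : ℕ → Submeasure) (hμ : SmoothSubmeasureSeq μ)
    (hlsc : ∀ n : ℕ, LowerSemicontinuousSubmeasure (μ n))
    (hAnalytic : MeasureTheory.AnalyticSet (chi '' I)) :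
    MeasureTheory.AnalyticSet (chi '' JIdeal I μ) :=
  stmt_5_general I hI μ hlsc hAnalytic
end

section
/- Let ν = (ν_n) and μ = (μ_n) be two smooth sequences of submeasures and let α ∈ (0,1]. Suppose that the ideal Z_ν := {A ⊆ ℕ : limsup_{n→∞} ν_n(A) = 0} is α-thick and that μ is α-flat. Then for every Hausdorff topological space X, every sequence (x_n) in X and every ℓ ∈ X, (x_n) is (Z_ν,μ)-convergent to ℓ if and only if (x_n) is Z_μ-convergent to ℓ (where Z_μ := {A ⊆ ℕ : limsup_{n→∞} μ_n(A) = 0}); equivalently, J(Z_ν,μ) = Z_μ. -/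
open Filter Set Topology

/-- `Z_μ = {A ⊆ ℕ : limsup_n μ_n(A) = 0}`. -/
def ZIdeal (μ : ℕ → Submeasure) : Set (Set ℕ) :=
  {A : Set ℕ | Filter.limsup (fun n => μ n A) atTop = 0}

/-- An ideal (or any family of subsets of ℕ) is `α`-thick if `A ∉ I` whenever there
exist `c > 0` and infinitely many `n` with `ℕ ∩ [n, n + c·n^α] ⊆ A`. -/
def AlphaThick (α : ℝ) (I : Set (Set ℕ)) : Prop :=
  ∀ A : Set ℕ, ∀ c : ℝ, 0 < c →
    {n : ℕ | ∀ m : ℕ, n ≤ m → (m : ℝ) ≤ (n : ℝ) + c * (n : ℝ) ^ α → m ∈ A}.Infinite →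
    A ∉ I

/-- A sequence of submeasures is `α`-flat if for each `A ⊆ ℕ` there is `d > 0` with
`|μ_{n+1}(A) − μ_n(A)| ≤ d/n^α` for all `n ≥ 1` (the two-sided inequality in `[0,∞]`). -/
def AlphaFlat (α : ℝ) (μ : ℕ → Submeasure) : Prop :=
  ∀ A : Set ℕ, ∃ d : ℝ, 0 < d ∧ ∀ n : ℕ, 1 ≤ n →
    μ (n + 1) A ≤ μ n A + ENNReal.ofReal (d / (n : ℝ) ^ α) ∧
    μ n A ≤ μ (n + 1) A + ENNReal.ofReal (d / (n : ℝ) ^ α)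

open scoped ENNReal

/-! Large values of an `α`-flat sequence persist over windows `[n, n + c·n^α]`, so if
`limsup μ_n(A) > 0` then `{n : μ_n(A) ≥ ε}` contains infinitely many such windows and thickness keeps
it out of `Z_ν`; hence `J(Z_ν,μ) ⊆ Z_μ`. Conversely, for `A ∈ Z_μ` that set is finite, and smoothness
of `ν` puts finite sets in `Z_ν`. Both convergence notions are membership of `{k : x_k ∉ U}` in
`J(Z_ν,μ)` and in `Z_μ` respectively. -/

lemma mem_ZIdeal_iff_tendsto {μ : ℕ → Submeasure} {A : Set ℕ} :
    A ∈ ZIdeal μ ↔ Tendsto (fun n => μ n A) atTop (𝓝 0) :=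
  ⟨fun h => tendsto_of_le_liminf_of_limsup_le zero_le h.le, fun h => h.limsup_eq⟩

lemma union_mem_ZIdeal {μ : ℕ → Submeasure} {A B : Set ℕ} (hA : A ∈ ZIdeal μ)
    (hB : B ∈ ZIdeal μ) : A ∪ B ∈ ZIdeal μ := by
  rw [mem_ZIdeal_iff_tendsto] at *
  have hsum : Tendsto (fun n => μ n A + μ n B) atTop (𝓝 0) := by simpa using hA.add hB
  exact tendsto_of_tendsto_of_tendsto_of_le_of_le tendsto_const_nhds hsum
    (fun _ => zero_le) (fun n => (μ n).subadd' A B)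

lemma finite_mem_ZIdeal {μ : ℕ → Submeasure}
    (hμ : ∀ k : ℕ, Tendsto (fun n => μ n {k}) atTop (𝓝 0)) {A : Set ℕ} (hA : A.Finite) :
    A ∈ ZIdeal μ := by
  induction A, hA using Set.Finite.induction_on with
  | empty => simp [mem_ZIdeal_iff_tendsto, Submeasure.empty']
  | insert _ _ ih =>
    rw [Set.insert_eq]
    exact union_mem_ZIdeal (mem_ZIdeal_iff_tendsto.2 (hμ _)) ih

lemma ZIdeal_subset_JIdeal {ν : ℕ → Submeasure}
    (hν : ∀ k : ℕ, Tendsto (fun n => ν n {k}) atTop (𝓝 0)) (μ : ℕ → Submeasure) :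
    ZIdeal μ ⊆ JIdeal (ZIdeal ν) μ := by
  intro A hA ε hε
  have hsmall : ∀ᶠ n in cofinite, μ n A < ENNReal.ofReal ε := by
    rw [Nat.cofinite_eq_atTop]
    exact (mem_ZIdeal_iff_tendsto.1 hA).eventually_lt_const (ENNReal.ofReal_pos.2 hε)
  refine finite_mem_ZIdeal hν ?_
  simpa only [Filter.eventually_cofinite, not_lt] using hsmall

lemma le_add_mul_of_le_succ_add {f : ℕ → ℝ≥0∞} {δ : ℝ≥0∞} {n : ℕ}
    (h : ∀ k, n ≤ k → f k ≤ f (k + 1) + δ) (j : ℕ) : f n ≤ f (n + j) + j * δ := by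
  induction j with
  | zero => simp
  | succ j ih =>
    calc f n ≤ f (n + j) + j * δ := ih
      _ ≤ f (n + j + 1) + δ + j * δ := by gcongr; exact h _ (Nat.le_add_right n j)
      _ = f (n + (j + 1)) + (j + 1 : ℕ) * δ := by push_cast; ring_nf

lemma AlphaFlat.exists_window {α : ℝ} {μ : ℕ → Submeasure} (hα : 0 ≤ α) (hflat : AlphaFlat α μ)
    (A : Set ℕ) {ε : ℝ} (hε : 0 < ε) :
    ∃ c > 0, ∀ n m : ℕ, 1 ≤ n → n ≤ m → (m : ℝ) ≤ n + c * (n : ℝ) ^ α →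
      μ n A ≤ μ m A + ENNReal.ofReal ε := by
  obtain ⟨d, hd, hstep⟩ := hflat A
  refine ⟨ε / d, div_pos hε hd, fun n m hn hnm hm => ?_⟩
  have hstep_n : ∀ k, n ≤ k → μ k A ≤ μ (k + 1) A + ENNReal.ofReal (d / (n : ℝ) ^ α) := by
    intro k hk
    refine (hstep k (hn.trans hk)).2.trans ?_
    gcongr
  obtain ⟨j, rfl⟩ := Nat.exists_eq_add_of_le hnm
  have hj : (j : ℝ) * (d / (n : ℝ) ^ α) ≤ ε := by
    push_cast at hm
    calc (j : ℝ) * (d / (n : ℝ) ^ α) ≤ ε / d * (n : ℝ) ^ α * (d / (n : ℝ) ^ α) := by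
          gcongr; linarith
      _ = ε := by field_simp
  calc μ n A ≤ μ (n + j) A + j * ENNReal.ofReal (d / (n : ℝ) ^ α) :=
        le_add_mul_of_le_succ_add hstep_n j
    _ = μ (n + j) A + ENNReal.ofReal (j * (d / (n : ℝ) ^ α)) := by
        rw [ENNReal.ofReal_mul (Nat.cast_nonneg j), ENNReal.ofReal_natCast]
    _ ≤ μ (n + j) A + ENNReal.ofReal ε := by gcongr

lemma JIdeal_subset_ZIdeal {α : ℝ} {ν μ : ℕ → Submeasure} (hα : 0 ≤ α)
    (hthick : AlphaThick α (ZIdeal ν)) (hflat : AlphaFlat α μ) :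
    JIdeal (ZIdeal ν) μ ⊆ ZIdeal μ := by
  intro A hA
  by_contra hA_Z
  obtain ⟨r, -, hr_pos, hr_lt⟩ :=
    ENNReal.lt_iff_exists_real_btwn.1 (pos_iff_ne_zero.2 hA_Z)
  have hr : 0 < r := ENNReal.ofReal_pos.1 hr_pos
  have hhalf : ENNReal.ofReal (r / 2) + ENNReal.ofReal (r / 2) = ENNReal.ofReal r := by
    rw [← ENNReal.ofReal_add (by positivity) (by positivity), add_halves]
  obtain ⟨c, hc, hwindow⟩ := hflat.exists_window hα A (half_pos hr)
  have hlarge : {n : ℕ | 1 ≤ n ∧ ENNReal.ofReal r < μ n A}.Infinite :=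
    Nat.frequently_atTop_iff_infinite.1 <|
      ((frequently_lt_of_lt_limsup (by isBoundedDefault) hr_lt).and_eventually
        (eventually_ge_atTop 1)).mono fun _ h => ⟨h.2, h.1⟩
  refine hthick _ c hc (hlarge.mono ?_) (hA (r / 2) (half_pos hr))
  rintro n ⟨hn, hnA⟩ m hnm hm
  have : ENNReal.ofReal (r / 2) + ENNReal.ofReal (r / 2) ≤ μ m A + ENNReal.ofReal (r / 2) :=
    hhalf ▸ hnA.le.trans (hwindow n m hn hnm hm)
  exact (ENNReal.add_le_add_iff_right ENNReal.ofReal_ne_top).1 this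

lemma iMuConv_iff_idealConv_JIdeal (I : Set (Set ℕ)) (μ : ℕ → Submeasure) {X : Type*}
    [TopologicalSpace X] (x : ℕ → X) (l : X) :
    IMuConv I μ x l ↔ IdealConv (JIdeal I μ) x l :=
  Iff.rfl

theorem stmt_6_general (ν μ : ℕ → Submeasure) (hν : SmoothSubmeasureSeq ν)
    (α : ℝ) (hα0 : 0 < α)
    (hthick : AlphaThick α (ZIdeal ν)) (hflat : AlphaFlat α μ) :
    (∀ (X : Type*) [TopologicalSpace X] [T2Space X] (x : ℕ → X) (l : X),
        IMuConv (ZIdeal ν) μ x l ↔ IdealConv (ZIdeal μ) x l) ∧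
      JIdeal (ZIdeal ν) μ = ZIdeal μ := by
  have hJ : JIdeal (ZIdeal ν) μ = ZIdeal μ :=
    (JIdeal_subset_ZIdeal hα0.le hthick hflat).antisymm (ZIdeal_subset_JIdeal hν.1 μ)
  refine ⟨fun X _ _ x l => ?_, hJ⟩
  rw [iMuConv_iff_idealConv_JIdeal, hJ]

/-- if `Z_ν` is `α`-thick and `μ` is `α`-flat for some `α ∈ (0,1]`, then
`(Z_ν,μ)`-convergence coincides with `Z_μ`-convergence, and `J(Z_ν,μ) = Z_μ`. -/
theorem stmt_6 (ν μ : ℕ → Submeasure) (hν : SmoothSubmeasureSeq ν) (hμ : SmoothSubmeasureSeq μ)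
    (α : ℝ) (hα0 : 0 < α) (hα1 : α ≤ 1)
    (hthick : AlphaThick α (ZIdeal ν)) (hflat : AlphaFlat α μ) :
    (∀ (X : Type*) [TopologicalSpace X] [T2Space X] (x : ℕ → X) (l : X),
        IMuConv (ZIdeal ν) μ x l ↔ IdealConv (ZIdeal μ) x l) ∧
      JIdeal (ZIdeal ν) μ = ZIdeal μ :=
  stmt_6_general ν μ hν α hα0 hthick hflat
end

section
/- Let I be an ideal on ℕ with I ⊆ Z, where Z is the density zero ideal. Then I-statistical convergence coincides with statistical convergence: for every Hausdorff topological space X, every sequence (x_n) in X and every ℓ ∈ X, (x_n) is I-statistically convergent to ℓ if and only if {k ∈ ℕ : x_k ∉ U} ∈ Z for every neighborhood U of ℓ. -/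
open Filter Set Topology

/-- `λ_n(A) = |A ∩ [1,n]| / n`. -/
noncomputable def lam (n : ℕ) (A : Set ℕ) : ℝ :=
  ((A ∩ Set.Icc 1 n).ncard : ℝ) / n

/-- The density zero ideal `Z = {A ⊆ ℕ : lim_n λ_n(A) = 0}`. -/
def Zstat : Set (Set ℕ) :=
  {A : Set ℕ | Tendsto (fun n => lam n A) atTop (nhds 0)}

/-- `I`-statistical convergence of a sequence `x` to `l`:
`{n : λ_n({k : x_k ∉ U}) ≥ ε} ∈ I` for every neighborhood `U` of `l` and `ε > 0`. -/
def IStatConv (I : Set (Set ℕ)) {X : Type*} [TopologicalSpace X]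
    (x : ℕ → X) (l : X) : Prop :=
  ∀ U ∈ nhds l, ∀ ε : ℝ, 0 < ε → {n : ℕ | ε ≤ lam n {k : ℕ | x k ∉ U}} ∈ I

/-! If `λ_n(A) ≥ ε`, then `λ_m(A) ≥ ε/2` for every `m ∈ [n, 2n]`, so `λ_{2n}` of
`{m : λ_m(A) ≥ ε/2}` exceeds `1/2`. Hence if `λ_n(A) ≥ ε` for infinitely many `n`, the set
`{m : λ_m(A) ≥ ε/2}`, which lies in `I ⊆ Z`, would not have density zero. Conversely, for
`A ∈ Z` each set `{n : λ_n(A) ≥ ε}` is finite, hence in `I`. -/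

lemma lam_nonneg (n : ℕ) (A : Set ℕ) : 0 ≤ lam n A :=
  div_nonneg (by positivity) (by positivity)

lemma mem_Zstat_iff {A : Set ℕ} : A ∈ Zstat ↔ ∀ ε : ℝ, 0 < ε → ∀ᶠ n in atTop, lam n A < ε := by
  refine tendsto_order.trans ?_
  simp only [and_iff_right_iff_imp]
  exact fun _ a ha => Eventually.of_forall fun n => ha.trans_le (lam_nonneg n A)

lemma natCast_mul_lam (n : ℕ) (A : Set ℕ) : (n : ℝ) * lam n A = (A ∩ Icc 1 n).ncard := by
  rcases n.eq_zero_or_pos with rfl | hn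
  · simp
  · rw [lam, mul_div_cancel₀]
    positivity

lemma monotone_natCast_mul_lam (A : Set ℕ) : Monotone fun n : ℕ => (n : ℝ) * lam n A := by
  intro n m hnm
  simp only [natCast_mul_lam]
  exact_mod_cast ncard_le_ncard (inter_subset_inter_right _ (Icc_subset_Icc_right hnm))
    ((finite_Icc 1 m).subset inter_subset_right)

lemma half_le_lam_of_le_of_le_two_mul {A : Set ℕ} {n m : ℕ} {ε : ℝ} (hε : 0 < ε)
    (hn : ε ≤ lam n A) (hnm : n ≤ m) (hm : m ≤ 2 * n) : ε / 2 ≤ lam m A := by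
  have hn0 : 0 < n := by
    by_contra! h
    rw [Nat.le_zero.1 h, lam, Nat.cast_zero, div_zero] at hn
    linarith
  have hm0 : (0 : ℝ) < m := by exact_mod_cast hn0.trans_le hnm
  have hmono := monotone_natCast_mul_lam A hnm
  have hm' : (m : ℝ) ≤ 2 * n := by exact_mod_cast hm
  rw [div_le_iff₀ two_pos, ← mul_le_mul_iff_of_pos_left hm0]
  nlinarith

lemma half_lt_lam_two_mul_of_Icc_subset {S : Set ℕ} {n : ℕ} (hn : 0 < n)
    (hS : Icc n (2 * n) ⊆ S) : 1 / 2 < lam (2 * n) S := by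
  have hcard : (n : ℝ) + 1 ≤ (S ∩ Icc 1 (2 * n)).ncard := by
    norm_cast
    calc n + 1 = (Icc n (2 * n)).ncard := by rw [ncard_Icc_nat]; omega
      _ ≤ _ := ncard_le_ncard (subset_inter hS (Icc_subset_Icc_left hn))
          ((finite_Icc 1 (2 * n)).subset inter_subset_right)
  have h2n : (0 : ℝ) < (2 * n : ℕ) := by positivity
  rw [← mul_lt_mul_iff_of_pos_left h2n, natCast_mul_lam]
  push_cast
  linarith

lemma notMem_Zstat_of_frequently_Icc_subset {S : Set ℕ}
    (h : ∃ᶠ n in atTop, Icc n (2 * n) ⊆ S) : S ∉ Zstat := by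
  intro hS
  have h2n : Tendsto (fun n : ℕ => 2 * n) atTop atTop :=
    tendsto_atTop_mono (fun n => Nat.le_mul_of_pos_left n two_pos) tendsto_id
  have hsmall : ∀ᶠ n in atTop, lam (2 * n) S < 1 / 2 :=
    (hS.comp h2n).eventually (gt_mem_nhds one_half_pos)
  obtain ⟨n, hsub, hlt, hn⟩ := (h.and_eventually (hsmall.and (eventually_gt_atTop 0))).exists
  exact hlt.not_gt (half_lt_lam_two_mul_of_Icc_subset hn hsub)

lemma mem_Zstat_of_forall_setOf_le_lam_mem_Zstat {A : Set ℕ}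
    (h : ∀ ε : ℝ, 0 < ε → {n | ε ≤ lam n A} ∈ Zstat) : A ∈ Zstat := by
  refine mem_Zstat_iff.2 fun ε hε => ?_
  by_contra hA
  simp only [not_eventually, not_lt] at hA
  refine notMem_Zstat_of_frequently_Icc_subset ?_ (h (ε / 2) (half_pos hε))
  exact hA.mono fun n hn m hm => half_le_lam_of_le_of_le_two_mul hε hn hm.1 hm.2

lemma finite_setOf_le_lam_of_mem_Zstat {A : Set ℕ} (hA : A ∈ Zstat) {ε : ℝ} (hε : 0 < ε) :
    {n | ε ≤ lam n A}.Finite := by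
  have h := mem_Zstat_iff.1 hA ε hε
  rw [← Nat.cofinite_eq_atTop, eventually_cofinite] at h
  simpa only [not_lt] using h

theorem stmt_7_general {X : Type*} [TopologicalSpace X]
    (I : Set (Set ℕ)) (hI : IsProperIdeal I) (hIZ : I ⊆ Zstat)
    (x : ℕ → X) (l : X) :
    IStatConv I x l ↔ ∀ U ∈ nhds l, {k : ℕ | x k ∉ U} ∈ Zstat := by
  constructor
  · intro h U hU
    exact mem_Zstat_of_forall_setOf_le_lam_mem_Zstat fun ε hε => hIZ (h U hU ε hε)
  · intro h U hU ε hε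
    exact hI.1.1 _ (finite_setOf_le_lam_of_mem_Zstat (h U hU) hε)

/-- if `I ⊆ Z` then `I`-statistical convergence coincides with
statistical convergence. -/
theorem stmt_7 {X : Type*} [TopologicalSpace X] [T2Space X]
    (I : Set (Set ℕ)) (hI : IsProperIdeal I) (hIZ : I ⊆ Zstat)
    (x : ℕ → X) (l : X) :
    IStatConv I x l ↔ ∀ U ∈ nhds l, {k : ℕ | x k ∉ U} ∈ Zstat :=
  stmt_7_general I hI hIZ x l
end

section
/- Let I_{1/n} := {A ⊆ ℕ : ∑_{a ∈ A} 1/a < ∞} be the summable ideal. Then I_{1/n}-statistical convergence coincides with statistical convergence: for every Hausdorff topological space X, every sequence (x_n) in X and every ℓ ∈ X, (x_n) is I_{1/n}-statistically convergent to ℓ if and only if {k ∈ ℕ : x_k ∉ U} ∈ Z for every neighborhood U of ℓ. -/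
open Filter Set Topology

/-- The summable ideal `I_{1/n} = {A ⊆ ℕ : ∑_{a ∈ A} 1/a < ∞}`. -/
def summableIdeal : Set (Set ℕ) :=
  {A : Set ℕ | Summable (A.indicator fun n : ℕ => (1 : ℝ) / n)}

/-- If `ε ≤ lam n A` with `1 ≤ n`, then `ε/2 ≤ lam m A` for every `n ≤ m ≤ 2n`. -/
lemma lam_half {A : Set ℕ} {ε : ℝ} {n m : ℕ} (hε0 : 0 ≤ ε) (hn : 1 ≤ n)
    (hε : ε ≤ lam n A) (h1 : n ≤ m) (h2 : m ≤ 2 * n) : ε / 2 ≤ lam m A := by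
  have hm : 1 ≤ m := le_trans hn h1
  have hsub : A ∩ Set.Icc 1 n ⊆ A ∩ Set.Icc 1 m :=
    Set.inter_subset_inter_right _ (Set.Icc_subset_Icc_right h1)
  have hfin : (A ∩ Set.Icc 1 m).Finite :=
    (Set.finite_Icc 1 m).subset Set.inter_subset_right
  have hcard : ((A ∩ Set.Icc 1 n).ncard : ℝ) ≤ ((A ∩ Set.Icc 1 m).ncard : ℝ) := by
    exact_mod_cast Set.ncard_le_ncard hsub hfin
  have hnpos : (0:ℝ) < n := by exact_mod_cast hn
  have hmpos : (0:ℝ) < m := by exact_mod_cast hm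
  have hεn : ε * n ≤ ((A ∩ Set.Icc 1 n).ncard : ℝ) := by
    have h := hε
    unfold lam at h
    rw [le_div_iff₀ hnpos] at h
    exact h
  have hm2 : (m:ℝ) ≤ 2 * n := by exact_mod_cast h2
  unfold lam
  rw [le_div_iff₀ hmpos]
  calc ε / 2 * m ≤ ε / 2 * (2 * n) := by
        apply mul_le_mul_of_nonneg_left hm2 (by linarith)
    _ = ε * n := by ring
    _ ≤ ((A ∩ Set.Icc 1 n).ncard : ℝ) := hεn
    _ ≤ ((A ∩ Set.Icc 1 m).ncard : ℝ) := hcard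

/-- `I_{1/n}`-statistical convergence coincides with statistical
convergence. -/
theorem stmt_8 {X : Type*} [TopologicalSpace X] [T2Space X]
    (x : ℕ → X) (l : X) :
    IStatConv summableIdeal x l ↔ ∀ U ∈ nhds l, {k : ℕ | x k ∉ U} ∈ Zstat := by
  constructor
  · intro h U hU
    set A := {k : ℕ | x k ∉ U} with hAdef
    simp only [Zstat, Set.mem_setOf_eq]
    rw [Metric.tendsto_atTop]
    by_contra hc
    push_neg at hc
    obtain ⟨ε, hε, hfreq⟩ := hc
    -- translate dist to lam
    have hfreq' : ∀ N : ℕ, ∃ n ≥ N, ε ≤ lam n A := by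
      intro N
      obtain ⟨n, hnN, hd⟩ := hfreq N
      refine ⟨n, hnN, ?_⟩
      rwa [Real.dist_eq, sub_zero, abs_of_nonneg (lam_nonneg n A)] at hd
    have hS : Summable ({n : ℕ | ε / 2 ≤ lam n A}.indicator
        fun n : ℕ => (1 : ℝ) / n) := h U hU (ε / 2) (by linarith)
    set g : ℕ → ℝ := {n : ℕ | ε / 2 ≤ lam n A}.indicator fun n : ℕ => (1 : ℝ) / n
      with hgdef
    have hg0 : ∀ n, 0 ≤ g n := by
      intro n
      apply Set.indicator_nonneg
      intro i _
      positivity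
    set p : ℕ → ℝ := fun n => ∑ i ∈ Finset.range n, g i with hpdef
    have htend : Tendsto p atTop (nhds (∑' n, g n)) := hS.hasSum.tendsto_sum_nat
    have h2n : Tendsto (fun n : ℕ => 2 * n + 1) atTop atTop :=
      tendsto_atTop_mono (fun n => by simp only [id_eq]; omega) tendsto_id
    have hdiff : Tendsto (fun n => p (2 * n + 1) - p n) atTop (nhds 0) := by
      have := (htend.comp h2n).sub htend
      simpa using this
    rw [Metric.tendsto_atTop] at hdiff
    obtain ⟨N, hN⟩ := hdiff (1 / 2) (by norm_num)
    obtain ⟨n, hnN, hlam⟩ := hfreq' (max N 1)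
    have hn1 : 1 ≤ n := le_trans (le_max_right N 1) hnN
    have hnn : N ≤ n := le_trans (le_max_left N 1) hnN
    have hlow : (1 : ℝ) / 2 ≤ p (2 * n + 1) - p n := by
      rw [hpdef]
      simp only
      rw [← Finset.sum_Ico_eq_sub g (by omega)]
      have hmem : ∀ i ∈ Finset.Ico n (2 * n + 1), (1 : ℝ) / (2 * n) ≤ g i := by
        intro i hi
        rw [Finset.mem_Ico] at hi
        have hiS : i ∈ {m : ℕ | ε / 2 ≤ lam m A} :=
          lam_half hε.le hn1 hlam hi.1 (by omega)
        rw [hgdef, Set.indicator_of_mem hiS]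
        apply one_div_le_one_div_of_le
        · exact_mod_cast (show 0 < i by omega)
        · exact_mod_cast (show i ≤ 2 * n by omega)
      calc (1 : ℝ) / 2 ≤ (n + 1) * (1 / (2 * n)) := by
            have hnpos : (0:ℝ) < n := by exact_mod_cast hn1
            rw [mul_one_div, le_div_iff₀ (by positivity)]
            linarith
        _ = (Finset.Ico n (2 * n + 1)).card * (1 / (2 * (n:ℝ))) := by
            rw [Nat.card_Ico, show 2 * n + 1 - n = n + 1 by omega]
            push_cast
            ring
        _ = ∑ _i ∈ Finset.Ico n (2 * n + 1), (1 : ℝ) / (2 * n) := by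
            rw [Finset.sum_const, nsmul_eq_mul]
        _ ≤ ∑ i ∈ Finset.Ico n (2 * n + 1), g i := Finset.sum_le_sum hmem
    have := hN n hnn
    rw [Real.dist_eq, sub_zero] at this
    have habs : p (2 * n + 1) - p n ≤ |p (2 * n + 1) - p n| := le_abs_self _
    linarith
  · intro h U hU ε hε
    have hz : Tendsto (fun n => lam n {k : ℕ | x k ∉ U}) atTop (nhds 0) := h U hU
    have hev : ∀ᶠ n in atTop, lam n {k : ℕ | x k ∉ U} < ε :=
      hz.eventually_lt_const hε
    rw [eventually_atTop] at hev
    obtain ⟨N, hN⟩ := hev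
    have hfin : {n : ℕ | ε ≤ lam n {k : ℕ | x k ∉ U}}.Finite := by
      apply (Set.finite_Iio N).subset
      intro n hn
      simp only [Set.mem_setOf_eq] at hn
      by_contra hcon
      simp only [Set.mem_Iio, not_lt] at hcon
      exact absurd (hN n hcon) (not_lt.mpr hn)
    show Summable _
    apply summable_of_finite_support
    exact hfin.subset Set.support_indicator_subset
end

section
/- Let v₂(n) denote the largest exponent m ≥ 0 such that 2^m divides n, and let I := {A ⊆ ℕ : for every k ∈ ℕ the set {n ∈ A : v₂(n) = k−1} is finite} (an isomorphic copy of the Fubini product ∅ × Fin on ℕ). Then I ⊆ Z, and consequently I-statistical convergence coincides with statistical convergence. -/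
open Filter Set Topology

/-- A copy of the Fubini product `∅ × Fin` on ℕ: the sets `A` such that, for every
`k`, only finitely many `n ∈ A` have 2-adic valuation exactly `k`. -/
def fubiniIdeal : Set (Set ℕ) :=
  {A : Set ℕ | ∀ k : ℕ, {n : ℕ | n ∈ A ∧ padicValNat 2 n = k}.Finite}

lemma lam_zero (A : Set ℕ) : lam 0 A = 0 := by
  simp [lam]

lemma lam_mul_eq_ncard (n : ℕ) (A : Set ℕ) : lam n A * n = (A ∩ Icc 1 n).ncard := by
  rcases n.eq_zero_or_pos with rfl | hn
  · simp [lam]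
  · exact div_mul_cancel₀ _ (by positivity)

lemma lam_mul_le_lam_mul {n m : ℕ} (h : n ≤ m) (A : Set ℕ) : lam n A * n ≤ lam m A * m := by
  rw [lam_mul_eq_ncard, lam_mul_eq_ncard]
  exact_mod_cast ncard_le_ncard (inter_subset_inter_right _ (Icc_subset_Icc_right h))
    ((finite_Icc 1 m).inter_of_right _)

lemma lam_le_two_mul_lam {n m : ℕ} (hnm : n ≤ m) (hm : m ≤ 2 * n) (A : Set ℕ) :
    lam n A ≤ 2 * lam m A := by
  rcases n.eq_zero_or_pos with rfl | hn
  · simpa [lam_zero] using lam_nonneg m A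
  · have hm' : (m : ℝ) ≤ 2 * n := by exact_mod_cast hm
    have : lam n A * n ≤ 2 * lam m A * n := by
      nlinarith [lam_mul_le_lam_mul hnm A, lam_nonneg m A]
    exact le_of_mul_le_mul_right this (by positivity)

lemma half_lt_lam_two_mul {n : ℕ} (hn : 0 < n) {S : Set ℕ} (h : Icc n (2 * n) ⊆ S) :
    1 / 2 < lam (2 * n) S := by
  have hcard : n + 1 ≤ (S ∩ Icc 1 (2 * n)).ncard :=
    calc n + 1 = (Icc n (2 * n)).ncard := by rw [ncard_Icc_nat]; omega
      _ ≤ (S ∩ Icc 1 (2 * n)).ncard :=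
        ncard_le_ncard (fun m hm => ⟨h hm, hn.trans_le hm.1, hm.2⟩)
          ((finite_Icc 1 (2 * n)).inter_of_right _)
  have hcard' : (n : ℝ) + 1 ≤ (S ∩ Icc 1 (2 * n)).ncard := by exact_mod_cast hcard
  rw [lam, lt_div_iff₀ (by positivity)]
  push_cast
  linarith

lemma mem_Zstat_iff_eventually_lt {A : Set ℕ} :
    A ∈ Zstat ↔ ∀ ε > 0, ∀ᶠ n in atTop, lam n A < ε := by
  rw [Zstat, mem_ofPred_eq, tendsto_order]
  exact and_iff_right fun a ha => Eventually.of_forall fun n => ha.trans_le (lam_nonneg n A)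

lemma mem_Zstat_iff_finite {A : Set ℕ} :
    A ∈ Zstat ↔ ∀ ε > 0, {n | ε ≤ lam n A}.Finite := by
  simp only [mem_Zstat_iff_eventually_lt, ← Nat.cofinite_eq_atTop, eventually_cofinite, not_lt]

lemma finite_setOf_le_lam_of_half_mem_Zstat {B : Set ℕ} {ε : ℝ} (hε : 0 < ε)
    (hS : {n | ε / 2 ≤ lam n B} ∈ Zstat) : {n | ε ≤ lam n B}.Finite := by
  have hev : ∀ᶠ n in atTop, lam (2 * n) {k | ε / 2 ≤ lam k B} < 1 / 2 :=
    tendsto_atTop_mono (fun n => Nat.le_mul_of_pos_left n two_pos) tendsto_id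
      |>.eventually (mem_Zstat_iff_eventually_lt.1 hS _ one_half_pos)
  rw [← Nat.cofinite_eq_atTop, eventually_cofinite] at hev
  refine hev.subset fun n (hn : ε ≤ lam n B) => not_lt.2 (le_of_lt ?_)
  have hn0 : 0 < n := Nat.pos_of_ne_zero fun h0 => by
    rw [h0, lam_zero] at hn; linarith
  exact half_lt_lam_two_mul hn0 fun m hm => by
    have := lam_le_two_mul_lam hm.1 hm.2 B
    show ε / 2 ≤ lam m B
    linarith

theorem iStatConv_iff_of_subset_Zstat {I : Set (Set ℕ)}
    (hfin : ∀ A : Set ℕ, A.Finite → A ∈ I) (hI : I ⊆ Zstat) {X : Type*}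
    [TopologicalSpace X] (x : ℕ → X) (l : X) :
    IStatConv I x l ↔ ∀ U ∈ 𝓝 l, {k | x k ∉ U} ∈ Zstat :=
  ⟨fun h U hU => mem_Zstat_iff_finite.2 fun _ hε =>
      finite_setOf_le_lam_of_half_mem_Zstat hε (hI (h U hU _ (half_pos hε))),
    fun h U hU ε hε => hfin _ (mem_Zstat_iff_finite.1 (h U hU) ε hε)⟩

lemma mem_fubiniIdeal_of_finite {A : Set ℕ} (hA : A.Finite) : A ∈ fubiniIdeal :=
  fun _ => hA.subset fun _ hn => hn.1

lemma finite_setOf_padicValNat_lt {A : Set ℕ} (hA : A ∈ fubiniIdeal) (K : ℕ) :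
    {m ∈ A | padicValNat 2 m < K}.Finite :=
  ((finite_Iio K).biUnion fun k _ => hA k).subset fun _ hm => mem_biUnion hm.2 ⟨hm.1, rfl⟩

lemma ncard_inter_Icc_le_add_div {A : Set ℕ} {K : ℕ}
    (hF : {m ∈ A | padicValNat 2 m < K}.Finite) (n : ℕ) :
    (A ∩ Icc 1 n).ncard ≤ {m ∈ A | padicValNat 2 m < K}.ncard + n / 2 ^ K := by
  classical
  set M := (Finset.Ioc 0 n).filter (2 ^ K ∣ ·)
  have hsub : A ∩ Icc 1 n ⊆ {m ∈ A | padicValNat 2 m < K} ∪ ↑M := by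
    rintro m ⟨hmA, hm1, hmn⟩
    by_cases hv : padicValNat 2 m < K
    · exact Or.inl ⟨hmA, hv⟩
    · refine Or.inr (Finset.mem_filter.2 ⟨Finset.mem_Ioc.2 ⟨hm1, hmn⟩, ?_⟩)
      exact (pow_dvd_pow 2 (not_lt.1 hv)).trans pow_padicValNat_dvd
  calc (A ∩ Icc 1 n).ncard ≤ ({m ∈ A | padicValNat 2 m < K} ∪ ↑M).ncard :=
        ncard_le_ncard hsub (hF.union M.finite_toSet)
    _ ≤ {m ∈ A | padicValNat 2 m < K}.ncard + (M : Set ℕ).ncard := ncard_union_le _ _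
    _ = _ := by rw [ncard_coe_finset, Nat.Ioc_filter_dvd_card_eq_div]

lemma lam_le_of_mem_fubiniIdeal {A : Set ℕ} (hA : A ∈ fubiniIdeal) (K n : ℕ) :
    lam n A ≤ {m ∈ A | padicValNat 2 m < K}.ncard / n + (1 / 2) ^ K := by
  rcases n.eq_zero_or_pos with rfl | hn
  · simp [lam_zero]
  set C := {m ∈ A | padicValNat 2 m < K}.ncard
  have hcount : ((A ∩ Icc 1 n).ncard : ℝ) ≤ C + n / 2 ^ K :=
    calc ((A ∩ Icc 1 n).ncard : ℝ) ≤ ((C + n / 2 ^ K : ℕ) : ℝ) := by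
          exact_mod_cast ncard_inter_Icc_le_add_div (finite_setOf_padicValNat_lt hA K) n
      _ ≤ C + n / 2 ^ K := by
          push_cast; gcongr; simpa using Nat.cast_div_le (α := ℝ) (m := n) (n := 2 ^ K)
  calc lam n A ≤ (C + n / 2 ^ K) / n := by rw [lam]; gcongr
    _ = C / n + (1 / 2) ^ K := by rw [div_pow, one_pow]; field_simp

theorem fubiniIdeal_subset_Zstat : fubiniIdeal ⊆ Zstat := by
  intro A hA
  refine mem_Zstat_iff_eventually_lt.2 fun ε hε => ?_
  obtain ⟨K, hK⟩ := exists_pow_lt_of_lt_one (half_pos hε) one_half_lt_one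
  have hC := tendsto_const_div_atTop_nhds_zero_nat ({m ∈ A | padicValNat 2 m < K}.ncard : ℝ)
  filter_upwards [hC.eventually (gt_mem_nhds (half_pos hε))] with n hn
  linarith [lam_le_of_mem_fubiniIdeal hA K n]

theorem stmt_9_general {X : Type*} [TopologicalSpace X]
    (x : ℕ → X) (l : X) :
    fubiniIdeal ⊆ Zstat ∧
      (IStatConv fubiniIdeal x l ↔ ∀ U ∈ nhds l, {k : ℕ | x k ∉ U} ∈ Zstat) :=
  ⟨fubiniIdeal_subset_Zstat, iStatConv_iff_of_subset_Zstat (fun _ => mem_fubiniIdeal_of_finite)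
    fubiniIdeal_subset_Zstat x l⟩

/-- the copy of `∅ × Fin` above is contained in `Z`, and consequently
its statistical convergence coincides with statistical convergence. -/
theorem stmt_9 {X : Type*} [TopologicalSpace X] [T2Space X]
    (x : ℕ → X) (l : X) :
    fubiniIdeal ⊆ Zstat ∧
      (IStatConv fubiniIdeal x l ↔ ∀ U ∈ nhds l, {k : ℕ | x k ∉ U} ∈ Zstat) :=
  stmt_9_general x l
end

section
/- Let I be a maximal ideal on ℕ. Then I-statistical convergence does not coincide with statistical convergence; equivalently, the ideal J(I,λ) := {A ⊆ ℕ : λ_n(A) →_I 0} is different from the density zero ideal Z. -/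
open Filter Set Topology

/-- `J(I,λ) = {A ⊆ ℕ : λ_n(A) →_I 0}`. -/
def Jlam (I : Set (Set ℕ)) : Set (Set ℕ) :=
  {A : Set ℕ | ∀ ε : ℝ, 0 < ε → {n : ℕ | ε ≤ lam n A} ∈ I}

/-!
Cut `ℕ` into blocks `[2^(j²), 2^((j+1)²))`, whose lengths grow so fast that every block
dwarfs all earlier ones. By maximality, the union of the even-indexed blocks or the union of the
odd-indexed blocks lies in `I`; let `S` be the corresponding set of indices. The set `A` formed by
the intervals `(2^(j²), 2·2^(j²)]`, `j ∈ S`, has `λ_n(A) ≥ 1/2` at `n = 2·2^(j²)`, so `A ∉ Z`.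
On a block with index `j ∉ S`, however, `A ∩ [1,n]` lies in the previous blocks, so
`λ_n(A) ≤ 2/j`; off a set in `I` the densities therefore tend to `0`, and `A ∈ J(I,λ)`.
-/

def blockStart (j : ℕ) : ℕ := 2 ^ (j ^ 2)

/-- The index `j` of the block `[blockStart j, blockStart (j+1))` containing `n ≠ 0`. -/
def blockIdx (n : ℕ) : ℕ := Nat.sqrt (Nat.log 2 n)

lemma le_blockIdx_iff {j n : ℕ} (hn : n ≠ 0) : j ≤ blockIdx n ↔ blockStart j ≤ n := by
  rw [blockIdx, Nat.le_sqrt', Nat.le_log_iff_pow_le one_lt_two hn, blockStart]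

lemma lt_blockStart_blockIdx_succ {n : ℕ} (hn : n ≠ 0) : n < blockStart (blockIdx n + 1) := by
  by_contra! h
  exact (Nat.lt_succ_self _).not_ge ((le_blockIdx_iff hn).2 h)

lemma tendsto_blockIdx_atTop : Tendsto blockIdx atTop atTop :=
  tendsto_atTop_atTop.2 fun j => ⟨blockStart j, fun n hn =>
    (le_blockIdx_iff (Nat.pos_of_ne_zero (by simp [blockStart]) |>.trans_le hn).ne').2 hn⟩

lemma blockStart_strictMono : StrictMono blockStart := fun _ _ h =>
  Nat.pow_lt_pow_right one_lt_two (Nat.pow_lt_pow_left h two_ne_zero)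

lemma one_le_blockStart (j : ℕ) : 1 ≤ blockStart j := Nat.one_le_two_pow

lemma le_blockStart (j : ℕ) : j ≤ blockStart j :=
  (Nat.lt_pow_self one_lt_two).le.trans
    (Nat.pow_le_pow_right two_pos (Nat.le_self_pow two_ne_zero j))

lemma blockStart_pred_mul_le (j : ℕ) : blockStart (j - 1) * j ≤ blockStart j := by
  rcases j with _ | j
  · simp
  have hj : j + 1 ≤ 2 ^ (2 * j + 1) :=
    (Nat.lt_pow_self one_lt_two).le.trans (Nat.pow_le_pow_right two_pos (by omega))
  calc blockStart j * (j + 1) ≤ 2 ^ (j ^ 2) * 2 ^ (2 * j + 1) := Nat.mul_le_mul_left _ hj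
    _ = blockStart (j + 1) := by rw [blockStart, ← pow_add]; ring_nf

def spikes (S : Set ℕ) : Set ℕ := ⋃ j ∈ S, Ioc (blockStart j) (2 * blockStart j)

lemma half_le_lam_spikes {S : Set ℕ} {j : ℕ} (hj : j ∈ S) :
    1 / 2 ≤ lam (2 * blockStart j) (spikes S) := by
  have hsub : Ioc (blockStart j) (2 * blockStart j) ⊆ spikes S ∩ Icc 1 (2 * blockStart j) :=
    fun x hx => ⟨mem_biUnion hj hx, by have := one_le_blockStart j; grind⟩
  have hcard : (blockStart j : ℝ) ≤ (spikes S ∩ Icc 1 (2 * blockStart j)).ncard := by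
    have := ncard_le_ncard hsub ((finite_Icc _ _).subset inter_subset_right)
    rw [ncard_Ioc_nat] at this
    exact_mod_cast (by omega : blockStart j ≤ _)
  have hpos : (0 : ℝ) < blockStart j := by exact_mod_cast one_le_blockStart j
  rw [lam, le_div_iff₀ (by push_cast; positivity)]
  push_cast
  linarith

lemma spikes_not_mem_Zstat {S : Set ℕ} (hS : S.Infinite) : spikes S ∉ Zstat := fun h => by
  obtain ⟨N, hN⟩ := eventually_atTop.1 (h.eventually_lt_const (by norm_num : (0 : ℝ) < 1 / 2))
  obtain ⟨j, hjS, hjN⟩ := hS.exists_gt N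
  have hsmall := hN _ (hjN.le.trans ((le_blockStart j).trans (Nat.le_mul_of_pos_left _ two_pos)))
  linarith [half_le_lam_spikes hjS]

lemma spikes_inter_Icc_subset {S : Set ℕ} {j n : ℕ} (hn : n < blockStart (j + 1)) (hj : j ∉ S) :
    spikes S ∩ Icc 1 n ⊆ Icc 1 (2 * blockStart (j - 1)) := by
  rintro x ⟨hx, hx1, hxn⟩
  obtain ⟨i, hiS, hix, hxi⟩ : ∃ i ∈ S, blockStart i < x ∧ x ≤ 2 * blockStart i := by
    simpa only [spikes, mem_iUnion₂, mem_Ioc, exists_prop] using hx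
  have hij : i < j + 1 := blockStart_strictMono.lt_iff_lt.1 (by omega)
  have hij' : i ≠ j := by rintro rfl; exact hj hiS
  have := blockStart_strictMono.monotone (show i ≤ j - 1 by omega)
  exact ⟨hx1, by omega⟩

lemma lam_spikes_le {S : Set ℕ} {j n : ℕ} (hjn : blockStart j ≤ n) (hn : n < blockStart (j + 1))
    (hj : j ∉ S) (hj0 : 0 < j) : lam n (spikes S) ≤ 2 / j := by
  have hcard : ((spikes S ∩ Icc 1 n).ncard : ℝ) ≤ 2 * blockStart (j - 1) := by
    have := ncard_le_ncard (spikes_inter_Icc_subset hn hj) (finite_Icc _ _)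
    rw [ncard_Icc_nat] at this
    exact_mod_cast (by omega : _ ≤ 2 * blockStart (j - 1))
  have hgrowth : (blockStart (j - 1) : ℝ) * j ≤ blockStart j := by
    exact_mod_cast blockStart_pred_mul_le j
  have hstart : (0 : ℝ) < blockStart j := by exact_mod_cast one_le_blockStart j
  have hjn' : (blockStart j : ℝ) ≤ n := by exact_mod_cast hjn
  have hj' : (0 : ℝ) < j := by exact_mod_cast hj0
  rw [lam, div_le_div_iff₀ (by linarith) hj']
  nlinarith

lemma tendsto_lam_spikes (S : Set ℕ) :
    Tendsto (fun n => lam n (spikes S)) (atTop ⊓ 𝓟 (blockIdx ⁻¹' Sᶜ)) (𝓝 0) := by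
  have hidx : Tendsto blockIdx (atTop ⊓ 𝓟 (blockIdx ⁻¹' Sᶜ)) atTop :=
    tendsto_blockIdx_atTop.mono_left inf_le_left
  refine squeeze_zero' (Eventually.of_forall fun n => by unfold lam; positivity) ?_
    ((tendsto_const_div_atTop_nhds_zero_nat 2).comp hidx)
  filter_upwards [hidx.eventually_gt_atTop 0, inf_le_left (a := atTop) (eventually_ne_atTop 0),
    inf_le_right (a := atTop) (mem_principal_self (blockIdx ⁻¹' Sᶜ))] with n hj0 hn hnS
  exact lam_spikes_le ((le_blockIdx_iff hn).1 le_rfl) (lt_blockStart_blockIdx_succ hn) hnS hj0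

lemma mem_Jlam_of_tendsto {I : Set (Set ℕ)} (hI : IsIdeal I) {A G : Set ℕ} (hG : G ∈ I)
    (h : Tendsto (fun n => lam n A) (atTop ⊓ 𝓟 Gᶜ) (𝓝 0)) : A ∈ Jlam I := by
  obtain ⟨hfin, hsub, hunion⟩ := hI
  intro ε hε
  obtain ⟨N, hN⟩ := eventually_atTop.1 (mem_inf_principal.1 (h.eventually_lt_const hε))
  refine hsub (fun n hn => ?_) (hunion (hfin _ (finite_Iio N)) hG)
  by_contra hnot
  simp only [mem_union, mem_Iio, not_or, not_lt] at hnot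
  have hlt : lam n A < ε := hN n hnot.1 hnot.2
  exact hlt.not_ge hn

/-- for a maximal ideal `I`, the ideal `J(I,λ)` is different from the
density zero ideal `Z`; i.e. `I`-statistical convergence does not coincide with
statistical convergence. -/
theorem stmt_10 (I : Set (Set ℕ)) (hI : IsProperIdeal I)
    (hmax : ∀ A : Set ℕ, A ∈ I ∨ Aᶜ ∈ I) :
    Jlam I ≠ Zstat := by
  obtain ⟨S, hS, hSI⟩ : ∃ S : Set ℕ, S.Infinite ∧ blockIdx ⁻¹' S ∈ I := by
    rcases hmax (blockIdx ⁻¹' {j | Even j}) with h | h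
    · refine ⟨{j | Even j}, infinite_of_forall_exists_gt fun a => ⟨2 * a + 2, ?_, by omega⟩, h⟩
      simp [parity_simps]
    · refine ⟨{j | Even j}ᶜ, infinite_of_forall_exists_gt fun a => ⟨2 * a + 1, ?_, by omega⟩, h⟩
      simp [parity_simps]
  intro heq
  exact spikes_not_mem_Zstat hS (heq ▸ mem_Jlam_of_tendsto hI.1 hSI (tendsto_lam_spikes S))
end

section
/- Let I be a maximal ideal on ℕ. Then for every α > 0, the ideal I is not α-thick: there exists a set A ∈ I such that for some c > 0 there are infinitely many n with ℕ ∩ [n, n + c·n^α] ⊆ A. (Indeed, with a₁ := 1 and a_{n+1} := 2^{a_n}, exactly one of A := ℕ ∩ ⋃_n [a_{2n}, a_{2n+1}] and its complement belongs to I, and each of these sets contains, for every c > 0, infinitely many intervals of the form ℕ ∩ [n, n + c·n^α].) -/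
open Filter Set Topology

/-!
With the tower `a 0 = 1`, `a (k+1) = 2 ^ a k`, the set `A = ⋃ₖ [a (2k), a (2k+1))` and its
complement each contain infinitely many intervals of the form `[n, 2 ^ n)`, and `2 ^ n` eventually
exceeds `n + c n^α`. A maximal ideal contains `A` or `Aᶜ`, which is therefore the required set.
-/

def tower : ℕ → ℕ
  | 0 => 1
  | k + 1 => 2 ^ tower k

lemma tower_strictMono : StrictMono tower :=
  strictMono_nat_of_lt_succ fun _ => Nat.lt_two_pow_self

lemma eventually_add_mul_rpow_lt_two_pow (α : ℝ) {c : ℝ} (hc : 0 ≤ c) :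
    ∀ᶠ n : ℕ in atTop, (n : ℝ) + c * (n : ℝ) ^ α < 2 ^ n := by
  obtain ⟨d, hαd⟩ : ∃ d : ℕ, α ≤ d := ⟨⌈α⌉₊, Nat.le_ceil α⟩
  have hlim : Tendsto (fun n : ℕ => ((n : ℝ) ^ 1 + c * (n : ℝ) ^ d) / 2 ^ n) atTop (𝓝 0) := by
    simpa only [add_div, mul_div_assoc, mul_zero, add_zero] using
      (tendsto_pow_const_div_const_pow_of_one_lt 1 one_lt_two).add
        ((tendsto_pow_const_div_const_pow_of_one_lt d one_lt_two).const_mul c)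
  filter_upwards [hlim.eventually (gt_mem_nhds one_pos), eventually_ge_atTop 1] with n hlt hn
  have hn : (1 : ℝ) ≤ n := by exact_mod_cast hn
  have hrpow : (n : ℝ) ^ α ≤ (n : ℝ) ^ d := by
    simpa only [Real.rpow_natCast] using Real.rpow_le_rpow_of_exponent_le hn hαd
  rw [div_lt_one (by positivity), pow_one] at hlt
  nlinarith

lemma infinite_setOf_rpow_block_subset (α : ℝ) {c : ℝ} (hc : 0 ≤ c) {A : Set ℕ}
    (hA : {n : ℕ | Ico n (2 ^ n) ⊆ A}.Infinite) :
    {n : ℕ | ∀ m : ℕ, n ≤ m → (m : ℝ) ≤ (n : ℝ) + c * (n : ℝ) ^ α → m ∈ A}.Infinite := by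
  rw [← Nat.frequently_atTop_iff_infinite] at hA ⊢
  refine (hA.and_eventually (eventually_add_mul_rpow_lt_two_pow α hc)).mono
    fun n ⟨hsub, hlt⟩ m hnm hm => hsub ⟨hnm, ?_⟩
  exact_mod_cast hm.trans_lt hlt

lemma notMem_iUnion_Ico_even_of_mem_Ico_odd {a : ℕ → ℕ} (ha : Monotone a) {k m : ℕ}
    (hm : m ∈ Ico (a (2 * k + 1)) (a (2 * k + 2))) :
    m ∉ ⋃ j, Ico (a (2 * j)) (a (2 * j + 1)) := by
  simp only [mem_iUnion, mem_Ico, not_exists, not_and, not_lt] at hm ⊢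
  intro j hj
  rcases le_or_gt j k with hjk | hjk
  · have := ha (show 2 * j + 1 ≤ 2 * k + 1 by omega)
    omega
  · have := ha (show 2 * k + 2 ≤ 2 * j by omega)
    omega

theorem stmt_12_general (I : Set (Set ℕ))
    (hmax : ∀ A : Set ℕ, A ∈ I ∨ Aᶜ ∈ I)
    (α : ℝ) :
    ∃ A ∈ I, ∃ c : ℝ, 0 < c ∧
      {n : ℕ | ∀ m : ℕ, n ≤ m → (m : ℝ) ≤ (n : ℝ) + c * (n : ℝ) ^ α → m ∈ A}.Infinite := by
  set A : Set ℕ := ⋃ k, Ico (tower (2 * k)) (tower (2 * k + 1))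
  have hinj (r : ℕ) : Function.Injective fun k => tower (2 * k + r) := fun i j hij => by
    have := tower_strictMono.injective hij
    omega
  have hA : {n : ℕ | Ico n (2 ^ n) ⊆ A}.Infinite :=
    infinite_of_injective_forall_mem (hinj 0) fun k => subset_iUnion_of_subset k subset_rfl
  have hAc : {n : ℕ | Ico n (2 ^ n) ⊆ Aᶜ}.Infinite :=
    infinite_of_injective_forall_mem (hinj 1) fun _ _ hm =>
      notMem_iUnion_Ico_even_of_mem_Ico_odd tower_strictMono.monotone hm
  rcases hmax A with h | h
  · exact ⟨A, h, 1, one_pos, infinite_setOf_rpow_block_subset α zero_le_one hA⟩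
  · exact ⟨Aᶜ, h, 1, one_pos, infinite_setOf_rpow_block_subset α zero_le_one hAc⟩

/-- a maximal ideal `I` is not `α`-thick for any `α > 0`: some
`A ∈ I` contains, for some `c > 0`, the block `ℕ ∩ [n, n + c·n^α]` for infinitely
many `n`. -/
theorem stmt_12 (I : Set (Set ℕ)) (hI : IsProperIdeal I)
    (hmax : ∀ A : Set ℕ, A ∈ I ∨ Aᶜ ∈ I)
    (α : ℝ) (hα : 0 < α) :
    ∃ A ∈ I, ∃ c : ℝ, 0 < c ∧
      {n : ℕ | ∀ m : ℕ, n ≤ m → (m : ℝ) ≤ (n : ℝ) + c * (n : ℝ) ^ α → m ∈ A}.Infinite :=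
  stmt_12_general I hmax α
end

section
/- Let (a_n)_{n≥1} be a strictly increasing sequence of positive integers with a_{n−1}/a_n → 0 as n → ∞ (where a₀ := 0), and let x : ℕ → {0,1} be a sequence that is constant on each block A_n := ℕ ∩ (a_{n−1}, a_n]. Then lim_{n→∞} ( x_{a_n} − (1/a_n) ∑_{i=1}^{a_n} x_i ) = 0. -/
/-!
On the block `(a n, a (n+1)]` the sequence equals `x (a (n+1))`, so
`x (a (n+1))` minus the average up to `a (n+1)` is `(a n * x (a (n+1)) - S) / a (n+1)`, where `S` is
the sum of the first `a n` terms. Both `a n * x (a (n+1))` and `S` lie in `[0, a n]`, so this is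
at most `a n / a (n+1)` in absolute value, which tends to `0`.
-/

open Filter Set Topology

theorem Finset.sum_Icc_one_eq_add_of_eqOn_Ioc {x : ℕ → ℝ} {m M : ℕ} {c : ℝ} (hmM : m ≤ M)
    (hc : ∀ i ∈ Finset.Ioc m M, x i = c) :
    ∑ i ∈ Finset.Icc 1 M, x i = ∑ i ∈ Finset.Icc 1 m, x i + (M - m : ℕ) * c := by
  have hIcc (k : ℕ) : Finset.Icc 1 k = Finset.Ioc 0 k := Finset.Icc_add_one_left_eq_Ioc 0 k
  simp only [hIcc]
  rw [← Finset.sum_Ioc_consecutive x (Nat.zero_le m) hmM, Finset.sum_congr rfl hc,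
    Finset.sum_const, Nat.card_Ioc, nsmul_eq_mul]

theorem sum_Icc_one_mem_Icc_of_forall_mem_Icc {x : ℕ → ℝ} (hx : ∀ i, x i ∈ Icc (0 : ℝ) 1)
    (m : ℕ) : ∑ i ∈ Finset.Icc 1 m, x i ∈ Icc (0 : ℝ) m := by
  refine ⟨Finset.sum_nonneg fun i _ => (hx i).1, ?_⟩
  calc ∑ i ∈ Finset.Icc 1 m, x i ≤ ∑ _i ∈ Finset.Icc 1 m, (1 : ℝ) :=
        Finset.sum_le_sum fun i _ => (hx i).2
    _ = m := by simp

theorem abs_sub_average_le_of_eqOn_Ioc {x : ℕ → ℝ} (hx : ∀ i, x i ∈ Icc (0 : ℝ) 1) {m M : ℕ}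
    (hmM : m < M) (hconst : ∀ i ∈ Finset.Ioc m M, x i = x M) :
    |x M - (1 / (M : ℝ)) * ∑ i ∈ Finset.Icc 1 M, x i| ≤ m / M := by
  have hM : (0 : ℝ) < M := by exact_mod_cast hmM.pos
  set S := ∑ i ∈ Finset.Icc 1 m, x i
  have hS := sum_Icc_one_mem_Icc_of_forall_mem_Icc hx m
  have hxM : (m : ℝ) * x M ∈ Icc (0 : ℝ) m :=
    ⟨by have := (hx M).1; positivity, mul_le_of_le_one_right (Nat.cast_nonneg m) (hx M).2⟩
  have hkey : x M - (1 / (M : ℝ)) * ∑ i ∈ Finset.Icc 1 M, x i = (m * x M - S) / M := by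
    rw [Finset.sum_Icc_one_eq_add_of_eqOn_Ioc hmM.le hconst, Nat.cast_sub hmM.le]
    field_simp
    ring
  rw [hkey, abs_div, abs_of_pos hM]
  gcongr
  exact abs_sub_le_of_nonneg_of_le hxM.1 hxM.2 hS.1 hS.2

theorem stmt_19_general (a : ℕ → ℕ) (hmono : StrictMono a)
    (hratio : Tendsto (fun n => (a n : ℝ) / (a (n + 1) : ℝ)) atTop (nhds 0))
    (x : ℕ → ℝ) (hx01 : ∀ n : ℕ, x n = 0 ∨ x n = 1)
    (hconst : ∀ n : ℕ, ∀ i j : ℕ, a n < i → i ≤ a (n + 1) → a n < j → j ≤ a (n + 1) →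
      x i = x j) :
    Tendsto (fun n => x (a n) - (1 / (a n : ℝ)) * ∑ i ∈ Finset.Icc 1 (a n), x i)
      atTop (nhds 0) := by
  have hx : ∀ i, x i ∈ Icc (0 : ℝ) 1 := fun i => by rcases hx01 i with h | h <;> simp [h]
  rw [← tendsto_add_atTop_iff_nat 1]
  refine squeeze_zero_norm (fun n => ?_) hratio
  have hlt : a n < a (n + 1) := hmono n.lt_succ_self
  exact abs_sub_average_le_of_eqOn_Ioc hx hlt fun i hi =>
    hconst n i _ (Finset.mem_Ioc.mp hi).1 (Finset.mem_Ioc.mp hi).2 hlt le_rfl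

/-- if `(a_n)` is strictly increasing with `a₀ = 0` and
`a_n / a_{n+1} → 0`, and the `{0,1}`-valued sequence `x` is constant on each block
`A_n = ℕ ∩ (a_{n-1}, a_n]`, then `x_{a_n} − (1/a_n) ∑_{i=1}^{a_n} x_i → 0`. -/
theorem stmt_19 (a : ℕ → ℕ) (ha0 : a 0 = 0) (hmono : StrictMono a)
    (hratio : Tendsto (fun n => (a n : ℝ) / (a (n + 1) : ℝ)) atTop (nhds 0))
    (x : ℕ → ℝ) (hx01 : ∀ n : ℕ, x n = 0 ∨ x n = 1)
    (hconst : ∀ n : ℕ, ∀ i j : ℕ, a n < i → i ≤ a (n + 1) → a n < j → j ≤ a (n + 1) →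
      x i = x j) :
    Tendsto (fun n => x (a n) - (1 / (a n : ℝ)) * ∑ i ∈ Finset.Icc 1 (a n), x i)
      atTop (nhds 0) :=
  stmt_19_general a hmono hratio x hx01 hconst
end
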